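/- arXiv:1206.6142 — 8 statements merged into one kernel-verified Lean document; each statement's English description precedes it below -/
import Mathlib

section
/- Let C1, C2, C3, C4 be four circles in the Euclidean plane EuclideanSpace ℝ (Fin 2), with centers o1, o2, o3, o4 and radii r1, r2, r3, r4 > 0, such that cyclically consecutive circles are orthogonal: dist o1 o2 ^ 2 = r1^2 + r2^2, dist o2 o3 ^ 2 = r2^2 + r3^2, dist o3 o4 ^ 2 = r3^2 + r4^2, and dist o4 o1 ^ 2 = r4^2 + r1^2. Let p be a common point of C4 and C1, let q be a common point of C1 and C2, and let s be a common point of C3 and C4, and assume that p lies neither on C2 nor on C3 (dist p o2 ≠ r2 and dist p o3 ≠ r3). Then there exists a common point r of C2 and C3 (dist r o2 = r2 and dist r o3 = r3) such that the four points p, q, r, s either lie on a common circle or are collinear, i.e., EuclideanGeometry.Cospherical {p, q, r, s} ∨ Collinear ℝ {p, q, r, s}. -/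
/-!
Invert in a circle about `p`. The circles `C₁, C₄` through `p` become perpendicular lines `ℓ₁, ℓ₄`;
the circles `C₂, C₃` become orthogonal circles `C₂', C₃'` whose centres `m₂, m₃` lie on `ℓ₁, ℓ₄`,
and `q, s` become points `q' ∈ ℓ₁ ∩ C₂'`, `s' ∈ ℓ₄ ∩ C₃'`. In the plane, `q' - m₂ ∥ ℓ₁` and
`s' - m₃ ∥ ℓ₄` are perpendicular, and then, by Pythagoras, the second intersection `r'` of the line
`q's'` with `C₂'` also lies on `C₃'`. Inverting back, the line through `q', r', s'` becomes a circle or a line through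
`p, q, r, s`.
-/

open RealInnerProductSpace Module

theorem inner_eq_zero_of_finrank_eq_two {V : Type*} [NormedAddCommGroup V]
    [InnerProductSpace ℝ V] (hV : finrank ℝ V = 2) {a b u w : V} (ha : a ≠ 0)
    (hb : b ≠ 0) (hab : ⟪a, b⟫ = 0) (hu : ⟪u, a⟫ = 0) (hw : ⟪w, b⟫ = 0) : ⟪u, w⟫ = 0 := by
  have : Fact (finrank ℝ V = 1 + 1) := ⟨hV⟩
  have hb' : b ∈ (ℝ ∙ a)ᗮ := Submodule.mem_orthogonal_singleton_iff_inner_right.2 hab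
  have hu' : u ∈ (ℝ ∙ a)ᗮ :=
    Submodule.mem_orthogonal_singleton_iff_inner_right.2 (by rwa [real_inner_comm])
  obtain ⟨k, hk⟩ := (finrank_eq_one_iff_of_nonzero' (⟨b, hb'⟩ : (ℝ ∙ a)ᗮ) (by simpa using hb)).1
    (Submodule.finrank_orthogonal_span_singleton ha) ⟨u, hu'⟩
  have hk' : k • b = u := congrArg Subtype.val hk
  rw [← hk', real_inner_smul_left, real_inner_comm, hw, mul_zero]

namespace EuclideanGeometry

section Power

variable {V P : Type*} [NormedAddCommGroup V] [MetricSpace P] [NormedAddTorsor V P]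

theorem Sphere.power_center_eq (s : Sphere P) (c : P) :
    s.power c = ‖s.center -ᵥ c‖ ^ 2 - s.radius ^ 2 := by
  rw [Sphere.power, dist_comm, dist_eq_norm_vsub V]

end Power

variable {V P : Type*} [NormedAddCommGroup V] [InnerProductSpace ℝ V] [MetricSpace P]
  [NormedAddTorsor V P]

def Sphere.IsOrthogonal (s t : Sphere P) : Prop :=
  dist s.center t.center ^ 2 = s.radius ^ 2 + t.radius ^ 2

/-- The image of `s` under `inversion c R`, provided `c ∉ s` (otherwise the image is a hyperplane
and this is the degenerate sphere `⟨c, 0⟩`). Its centre is not the image of `s.center`. -/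
noncomputable def inversionSphere (c : P) (R : ℝ) (s : Sphere P) : Sphere P where
  center := (R ^ 2 / s.power c) • (s.center -ᵥ c) +ᵥ c
  radius := |R ^ 2 / s.power c| * s.radius

theorem Sphere.IsOrthogonal.symm {s t : Sphere P} (h : s.IsOrthogonal t) : t.IsOrthogonal s := by
  rw [IsOrthogonal, dist_comm, h, add_comm]

theorem Sphere.IsOrthogonal.inner_vsub_eq_zero {s t : Sphere P} {c : P} (h : s.IsOrthogonal t)
    (hs : c ∈ s) (ht : c ∈ t) : ⟪s.center -ᵥ c, t.center -ᵥ c⟫ = 0 := by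
  rw [mem_sphere, dist_comm, dist_eq_norm_vsub V] at hs ht
  rw [IsOrthogonal, dist_eq_norm_vsub V, ← vsub_sub_vsub_cancel_right s.center t.center c,
    norm_sub_sq_real, hs, ht] at h
  linarith

theorem Sphere.power_eq_norm_vsub (s : Sphere P) (x c : P) :
    s.power x =
      ‖x -ᵥ c‖ ^ 2 - 2 * ⟪x -ᵥ c, s.center -ᵥ c⟫ + ‖s.center -ᵥ c‖ ^ 2 - s.radius ^ 2 := by
  rw [Sphere.power, dist_eq_norm_vsub V, ← vsub_sub_vsub_cancel_right x s.center c,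
    norm_sub_sq_real]

theorem power_inversionSphere_inversion {s : Sphere P} {c x : P} (hc : s.power c ≠ 0)
    (hx : x ≠ c) (R : ℝ) :
    (inversionSphere c R s).power (inversion c R x) =
      R ^ 4 / (s.power c * dist x c ^ 2) * s.power x := by
  have hd : dist x c ≠ 0 := dist_ne_zero.2 hx
  have hpc : dist s.center c ^ 2 = s.power c + s.radius ^ 2 := by
    rw [Sphere.power, dist_comm]; ring
  rw [Sphere.power_eq_norm_vsub _ _ c, Sphere.power_eq_norm_vsub s x c]
  simp only [inversionSphere, inversion_vsub_center, vadd_vsub, norm_smul, real_inner_smul_left,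
    real_inner_smul_right, mul_pow, Real.norm_eq_abs, sq_abs, ← dist_eq_norm_vsub V, hpc]
  field_simp
  ring

theorem power_inversionSphere_self (s : Sphere P) (c : P) (R : ℝ) :
    (inversionSphere c R s).power c = R ^ 4 / s.power c := by
  rw [Sphere.power_center_eq, Sphere.power_center_eq s c]
  simp only [inversionSphere, vadd_vsub, norm_smul, mul_pow, Real.norm_eq_abs, sq_abs,
    Sphere.power_center_eq s c]
  rcases eq_or_ne (‖s.center -ᵥ c‖ ^ 2 - s.radius ^ 2) 0 with h | h
  · simp [h]
  · field_simp

theorem inversion_mem_inversionSphere_iff {s : Sphere P} {c x : P} {R : ℝ} (hR : R ≠ 0)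
    (hc : s.power c ≠ 0) (hr : 0 ≤ s.radius) (hx : x ≠ c) :
    inversion c R x ∈ inversionSphere c R s ↔ x ∈ s := by
  rw [← Sphere.power_eq_zero_iff_mem_sphere hr,
    ← Sphere.power_eq_zero_iff_mem_sphere (by simp only [inversionSphere]; positivity),
    power_inversionSphere_inversion hc hx]
  simp [hR, hc, hx]

theorem center_notMem_inversionSphere {s : Sphere P} {c : P} {R : ℝ} (hR : R ≠ 0)
    (hc : s.power c ≠ 0) (hr : 0 ≤ s.radius) : c ∉ inversionSphere c R s := by
  rw [← Sphere.power_eq_zero_iff_mem_sphere (by simp only [inversionSphere]; positivity),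
    power_inversionSphere_self]
  simp [hR, hc]

theorem isOrthogonal_inversionSphere {s t : Sphere P} {c : P} (h : s.IsOrthogonal t)
    (hs : s.power c ≠ 0) (ht : t.power c ≠ 0) (R : ℝ) :
    (inversionSphere c R s).IsOrthogonal (inversionSphere c R t) := by
  have hs' : ‖s.center -ᵥ c‖ ^ 2 = s.power c + s.radius ^ 2 := by rw [Sphere.power_center_eq]; ring
  have ht' : ‖t.center -ᵥ c‖ ^ 2 = t.power c + t.radius ^ 2 := by rw [Sphere.power_center_eq]; ring
  rw [Sphere.IsOrthogonal, dist_eq_norm_vsub V, ← vsub_sub_vsub_cancel_right s.center t.center c,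
    norm_sub_sq_real, hs', ht'] at h
  simp only [Sphere.IsOrthogonal, inversionSphere, dist_eq_norm_vsub V,
    vadd_vsub_vadd_cancel_right, norm_sub_sq_real, norm_smul, real_inner_smul_left,
    real_inner_smul_right, mul_pow, Real.norm_eq_abs, sq_abs, hs', ht']
  field_simp
  linear_combination (R ^ 4 * s.power c * t.power c) * h

/-- The image of a sphere `s` through `c` is the hyperplane `⟪y -ᵥ c, s.center -ᵥ c⟫ = R ^ 2 / 2`;
the image of a sphere `t` orthogonal to `s` has its centre on that hyperplane. -/
theorem Sphere.IsOrthogonal.inner_inversion_vsub_inversionSphere_center {s t : Sphere P}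
    {c x : P} (h : s.IsOrthogonal t) (hc : c ∈ s) (ht : t.power c ≠ 0) (hx : x ∈ s)
    (hxc : x ≠ c) (R : ℝ) :
    ⟪inversion c R x -ᵥ (inversionSphere c R t).center, s.center -ᵥ c⟫ = 0 := by
  have hd : ‖x -ᵥ c‖ ≠ 0 := by simpa [vsub_eq_zero_iff_eq] using hxc
  have hxs : ‖x -ᵥ c‖ ^ 2 = 2 * ⟪x -ᵥ c, s.center -ᵥ c⟫ := by
    have := congrArg (· ^ 2) ((mem_sphere.1 hx).trans (mem_sphere.1 hc).symm)
    simp only [dist_comm c, dist_eq_norm_vsub V] at this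
    rw [← vsub_sub_vsub_cancel_right x s.center c, norm_sub_sq_real] at this
    linarith
  have hts : t.power c = 2 * ⟪t.center -ᵥ c, s.center -ᵥ c⟫ := by
    rw [mem_sphere, dist_comm, dist_eq_norm_vsub V] at hc
    rw [IsOrthogonal, dist_eq_norm_vsub V, ← vsub_sub_vsub_cancel_right s.center t.center c,
      norm_sub_sq_real, hc, real_inner_comm] at h
    rw [t.power_center_eq]
    linarith
  rw [← vsub_sub_vsub_cancel_right _ _ c, inner_sub_left, inversion_vsub_center,
    dist_eq_norm_vsub V, inversionSphere, vadd_vsub, real_inner_smul_left,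
    real_inner_smul_left]
  field_simp
  rw [hxs, hts]
  ring

theorem Sphere.IsOrthogonal.secondInter_mem {s t : Sphere P} {x y : P} (h : s.IsOrthogonal t)
    (hx : x ∈ s) (hy : y ∈ t) (hxy : ⟪x -ᵥ s.center, y -ᵥ t.center⟫ = 0) :
    s.secondInter x (y -ᵥ x) ∈ t := by
  rcases eq_or_ne x y with rfl | hne
  · simpa using hy
  rw [mem_sphere, dist_eq_norm_vsub V] at hx hy ⊢
  rw [IsOrthogonal, dist_eq_norm_vsub V] at h
  have hxt : x -ᵥ t.center = (y -ᵥ t.center) - (y -ᵥ x) :=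
    (vsub_sub_vsub_cancel_left _ _ _).symm
  have hb : y -ᵥ t.center = (y -ᵥ x) + (s.center -ᵥ t.center) + (x -ᵥ s.center) := by
    rw [add_right_comm, vsub_add_vsub_cancel, vsub_add_vsub_cancel]
  set a := x -ᵥ s.center
  set b := y -ᵥ t.center
  set d := s.center -ᵥ t.center
  set v := y -ᵥ x
  set τ := -2 * ⟪v, a⟫ / ⟪v, v⟫
  have hvv : ⟪v, v⟫ ≠ 0 := by simpa [v, vsub_eq_zero_iff_eq] using hne.symm
  have hτ : τ * ⟪v, v⟫ = -2 * ⟪v, a⟫ := div_mul_cancel₀ _ hvv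
  -- `‖v + d‖ = ‖b - a‖ = ‖d‖`, by Pythagoras for `a ⟂ b` and for the orthogonal spheres
  have key : ⟪v, v⟫ + 2 * ⟪v, d⟫ = 0 := by
    have : ‖v + d‖ ^ 2 = ‖d‖ ^ 2 := by
      rw [show v + d = b - a by rw [hb]; abel, norm_sub_sq_real, real_inner_comm, hxy, h, hx, hy]
      ring
    rw [norm_add_sq_real, ← real_inner_self_eq_norm_sq] at this
    linarith
  have hz : s.secondInter x v -ᵥ t.center = b + (τ - 1) • v := by
    rw [Sphere.secondInter, vadd_vsub_assoc, hxt, sub_smul, one_smul]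
    abel
  rw [hz, ← hy, ← sq_eq_sq₀ (norm_nonneg _) (norm_nonneg _), norm_add_sq_real, norm_smul,
    real_inner_smul_right, mul_pow, Real.norm_eq_abs, sq_abs, ← real_inner_self_eq_norm_sq v, hb,
    inner_add_left, inner_add_left, real_inner_comm v d, real_inner_comm v a]
  linear_combination (τ - 1) * hτ + (τ - 1) * key

theorem collinear_of_subset_affineSpan_pair {s : Set P} {x y : P} (h : s ⊆ line[ℝ, x, y]) :
    Collinear ℝ s :=
  (Submodule.rank_mono (vectorSpan_mono ℝ h)).trans <| by
    rw [← AffineSubspace.direction, direction_affineSpan]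
    exact collinear_pair ℝ x y

theorem cospherical_or_collinear_inversion {c x y z : P} {R : ℝ} (hR : R ≠ 0)
    (hz : z ∈ line[ℝ, x, y]) :
    Cospherical ({c, inversion c R x, inversion c R z, inversion c R y} : Set P) ∨
      Collinear ℝ ({c, inversion c R x, inversion c R z, inversion c R y} : Set P) := by
  have hx := left_mem_affineSpan_pair ℝ x y
  have hy := right_mem_affineSpan_pair ℝ x y
  by_cases hc : c ∈ line[ℝ, x, y]
  · right
    have hι := mapsTo_inversion_affineSubspace_of_mem (R := R) hc
    exact collinear_of_subset_affineSpan_pair (x := x) (y := y) <| by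
      simp [Set.insert_subset_iff, hc, hι hx, hι hy, hι hz]
  · left
    set w := reflection line[ℝ, x, y] c
    have hw : w ≠ c := by rwa [Ne, reflection_eq_self_iff]
    have hsphere : ∀ p ∈ line[ℝ, x, y],
        inversion c R p ∈ Metric.sphere (inversion c R w) (R ^ 2 / dist w c) := fun p hp => by
      have hp' : p ∈ AffineSubspace.perpBisector c w :=
        AffineSubspace.mem_perpBisector_iff_dist_eq.2 (dist_reflection_eq_of_mem _ hp c).symm
      have : inversion c R p ∈ inversion c R ⁻¹' AffineSubspace.perpBisector c w := by
        simpa [inversion_inversion c hR] using hp'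
      rw [preimage_inversion_perpBisector hR hw] at this
      exact this.1
    refine ⟨inversion c R w, R ^ 2 / dist w c, ?_⟩
    simp only [Set.mem_insert_iff, Set.mem_singleton_iff, forall_eq_or_imp, forall_eq]
    exact ⟨by rw [dist_center_inversion, dist_comm], hsphere x hx, hsphere z hz, hsphere y hy⟩

theorem inner_inversion_vsub_inversionSphere_center_eq_zero (hV : finrank ℝ V = 2)
    {C₁ C₂ C₃ C₄ : Sphere P} {c q s : P} (h₁₂ : C₁.IsOrthogonal C₂) (h₃₄ : C₃.IsOrthogonal C₄)
    (h₄₁ : C₄.IsOrthogonal C₁) (hc₁ : c ∈ C₁) (hc₄ : c ∈ C₄) (ho₁ : C₁.center ≠ c)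
    (ho₄ : C₄.center ≠ c) (hC₂ : C₂.power c ≠ 0) (hC₃ : C₃.power c ≠ 0) (hq : q ∈ C₁)
    (hqc : q ≠ c) (hs : s ∈ C₄) (hsc : s ≠ c) (R : ℝ) :
    ⟪inversion c R q -ᵥ (inversionSphere c R C₂).center,
      inversion c R s -ᵥ (inversionSphere c R C₃).center⟫ = 0 :=
  inner_eq_zero_of_finrank_eq_two hV (vsub_ne_zero.2 ho₁) (vsub_ne_zero.2 ho₄)
    (h₄₁.symm.inner_vsub_eq_zero hc₁ hc₄)
    (h₁₂.inner_inversion_vsub_inversionSphere_center hc₁ hC₂ hq hqc R)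
    (h₃₄.symm.inner_inversion_vsub_inversionSphere_center hc₄ hC₃ hs hsc R)

theorem exists_mem_inter_and_cospherical_or_collinear (hV : finrank ℝ V = 2)
    {C₁ C₂ C₃ C₄ : Sphere P} {p q s : P} (h₁₂ : C₁.IsOrthogonal C₂) (h₂₃ : C₂.IsOrthogonal C₃)
    (h₃₄ : C₃.IsOrthogonal C₄) (h₄₁ : C₄.IsOrthogonal C₁) (hp₁ : p ∈ C₁) (hp₄ : p ∈ C₄)
    (hq₁ : q ∈ C₁) (hq₂ : q ∈ C₂) (hs₃ : s ∈ C₃) (hs₄ : s ∈ C₄) (hp₂ : p ∉ C₂) (hp₃ : p ∉ C₃) :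
    ∃ r, r ∈ C₂ ∧ r ∈ C₃ ∧
      (Cospherical ({p, q, r, s} : Set P) ∨ Collinear ℝ ({p, q, r, s} : Set P)) := by
  have hr₂ : 0 ≤ C₂.radius := mem_sphere.1 hq₂ ▸ dist_nonneg
  have hr₃ : 0 ≤ C₃.radius := mem_sphere.1 hs₃ ▸ dist_nonneg
  have hpC₂ : C₂.power p ≠ 0 := by rwa [Ne, Sphere.power_eq_zero_iff_mem_sphere hr₂]
  have hpC₃ : C₃.power p ≠ 0 := by rwa [Ne, Sphere.power_eq_zero_iff_mem_sphere hr₃]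
  have hqp : q ≠ p := by rintro rfl; exact hp₂ hq₂
  have hsp : s ≠ p := by rintro rfl; exact hp₃ hs₃
  -- a sphere through `p` centred at `p` has no other point
  have ho₁ : C₁.center ≠ p := fun h => hqp <| dist_eq_zero.1 <| by
    rw [← h, mem_sphere.1 hq₁, ← mem_sphere.1 hp₁, h, dist_self]
  have ho₄ : C₄.center ≠ p := fun h => hsp <| dist_eq_zero.1 <| by
    rw [← h, mem_sphere.1 hs₄, ← mem_sphere.1 hp₄, h, dist_self]
  have hq' := (inversion_mem_inversionSphere_iff one_ne_zero hpC₂ hr₂ hqp).2 hq₂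
  have hs' := (inversion_mem_inversionSphere_iff one_ne_zero hpC₃ hr₃ hsp).2 hs₃
  set z := (inversionSphere p 1 C₂).secondInter (inversion p 1 q)
    (inversion p 1 s -ᵥ inversion p 1 q)
  have hz₂ : z ∈ inversionSphere p 1 C₂ := (Sphere.secondInter_mem _).2 hq'
  have hz₃ : z ∈ inversionSphere p 1 C₃ :=
    (isOrthogonal_inversionSphere h₂₃ hpC₂ hpC₃ 1).secondInter_mem hq' hs'
      (inner_inversion_vsub_inversionSphere_center_eq_zero hV h₁₂ h₃₄ h₄₁ hp₁ hp₄ ho₁ ho₄ hpC₂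
        hpC₃ hq₁ hqp hs₄ hsp 1)
  have hzp : inversion p 1 z ≠ p := by
    rw [Ne, inversion_eq_center one_ne_zero]
    intro h
    exact center_notMem_inversionSphere one_ne_zero hpC₂ hr₂ (h ▸ hz₂)
  have hιz : inversion p 1 (inversion p 1 z) = z := inversion_inversion p one_ne_zero z
  refine ⟨inversion p 1 z, (inversion_mem_inversionSphere_iff one_ne_zero hpC₂ hr₂ hzp).1
    (by rwa [hιz]), (inversion_mem_inversionSphere_iff one_ne_zero hpC₃ hr₃ hzp).1 (by rwa [hιz]),
    ?_⟩
  have h := cospherical_or_collinear_inversion (c := p) one_ne_zero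
    ((inversionSphere p 1 C₂).secondInter_vsub_mem_affineSpan (inversion p 1 q) (inversion p 1 s))
  rwa [inversion_inversion p one_ne_zero q, inversion_inversion p one_ne_zero s] at h

end EuclideanGeometry

theorem stmt_0_general (o1 o2 o3 o4 p q s : EuclideanSpace ℝ (Fin 2))
    (r1 r2 r3 r4 : ℝ)
    (h12 : dist o1 o2 ^ 2 = r1 ^ 2 + r2 ^ 2)
    (h23 : dist o2 o3 ^ 2 = r2 ^ 2 + r3 ^ 2)
    (h34 : dist o3 o4 ^ 2 = r3 ^ 2 + r4 ^ 2)
    (h41 : dist o4 o1 ^ 2 = r4 ^ 2 + r1 ^ 2)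
    (hp4 : dist p o4 = r4) (hp1 : dist p o1 = r1)
    (hq1 : dist q o1 = r1) (hq2 : dist q o2 = r2)
    (hs3 : dist s o3 = r3) (hs4 : dist s o4 = r4)
    (hp2 : dist p o2 ≠ r2) (hp3 : dist p o3 ≠ r3) :
    ∃ r : EuclideanSpace ℝ (Fin 2), dist r o2 = r2 ∧ dist r o3 = r3 ∧
      (EuclideanGeometry.Cospherical ({p, q, r, s} : Set (EuclideanSpace ℝ (Fin 2))) ∨
        Collinear ℝ ({p, q, r, s} : Set (EuclideanSpace ℝ (Fin 2)))) :=
  EuclideanGeometry.exists_mem_inter_and_cospherical_or_collinear (C₁ := ⟨o1, r1⟩)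
    (C₂ := ⟨o2, r2⟩) (C₃ := ⟨o3, r3⟩) (C₄ := ⟨o4, r4⟩) finrank_euclideanSpace_fin h12 h23 h34 h41
    hp1 hp4 hq1 hq2 hs3 hs4 hp2 hp3

/-- Circles-only core of the quadrilateral-circumcircle lemma: four cyclically
orthogonal circles, with common points `p` of `C4,C1`, `q` of `C1,C2`, `s` of
`C3,C4`, and `p` on neither `C2` nor `C3`; then there is a common point `r` of
`C2,C3` with `p,q,r,s` concyclic or collinear. -/
theorem stmt_0 (o1 o2 o3 o4 p q s : EuclideanSpace ℝ (Fin 2))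
    (r1 r2 r3 r4 : ℝ) (hr1 : 0 < r1) (hr2 : 0 < r2) (hr3 : 0 < r3) (hr4 : 0 < r4)
    (h12 : dist o1 o2 ^ 2 = r1 ^ 2 + r2 ^ 2)
    (h23 : dist o2 o3 ^ 2 = r2 ^ 2 + r3 ^ 2)
    (h34 : dist o3 o4 ^ 2 = r3 ^ 2 + r4 ^ 2)
    (h41 : dist o4 o1 ^ 2 = r4 ^ 2 + r1 ^ 2)
    (hp4 : dist p o4 = r4) (hp1 : dist p o1 = r1)
    (hq1 : dist q o1 = r1) (hq2 : dist q o2 = r2)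
    (hs3 : dist s o3 = r3) (hs4 : dist s o4 = r4)
    (hp2 : dist p o2 ≠ r2) (hp3 : dist p o3 ≠ r3) :
    ∃ r : EuclideanSpace ℝ (Fin 2), dist r o2 = r2 ∧ dist r o3 = r3 ∧
      (EuclideanGeometry.Cospherical ({p, q, r, s} : Set (EuclideanSpace ℝ (Fin 2))) ∨
        Collinear ℝ ({p, q, r, s} : Set (EuclideanSpace ℝ (Fin 2)))) :=
  stmt_0_general o1 o2 o3 o4 p q s r1 r2 r3 r4 h12 h23 h34 h41 hp4 hp1 hq1 hq2 hs3 hs4 hp2 hp3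
end

section
/- Let A be the circle in the Euclidean plane with center a and radius α > 0, and B the circle with center b and radius β > 0, and suppose A and B are orthogonal: dist a b ^ 2 = α^2 + β^2. Let q be a point of A whose first coordinate equals the first coordinate of a (so the vector q - a is vertical), and let s be a point of B whose second coordinate equals the second coordinate of b (so the vector s - b is horizontal). Then there exists a common point r of A and B (dist r a = α and dist r b = β) such that q, r, s are collinear: Collinear ℝ {q, r, s}. -/
/-!
Let `v = s - q` and let `r = q + t v` be the second intersection of the line `qs` with `A`, so that
`t ‖v‖² = -2 ⟪v, q - a⟫`. Writing `q - a = u`, `s - b = w`, `b - a = d`, we have `v - d = w - u`;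
since `u ⊥ w`, orthogonality of the circles gives `‖v - d‖² = ‖d‖²`, i.e. `‖v‖² = 2 ⟪v, d⟫`.
Expanding `‖r - b‖² = ‖t v + u - d‖²` with these two relations leaves exactly `‖w‖² = β²`.
-/

open EuclideanGeometry RealInnerProductSpace

namespace EuclideanGeometry.Sphere

variable {V P : Type*} [NormedAddCommGroup V] [InnerProductSpace ℝ V] [MetricSpace P]
  [NormedAddTorsor V P]

def IsOrthogonal_s1 (A B : Sphere P) : Prop :=
  dist A.center B.center ^ 2 = A.radius ^ 2 + B.radius ^ 2

theorem secondInter_mem_of_isOrthogonal {A B : Sphere P} (hAB : A.IsOrthogonal_s1 B) {q s : P}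
    (hq : q ∈ A) (hs : s ∈ B) (hqs : ⟪q -ᵥ A.center, s -ᵥ B.center⟫ = 0) :
    A.secondInter q (s -ᵥ q) ∈ B := by
  set u := q -ᵥ A.center
  set w := s -ᵥ B.center
  set d := B.center -ᵥ A.center
  set v := s -ᵥ q
  set t := -2 * ⟪v, u⟫ / ⟪v, v⟫
  have hu : ⟪u, u⟫ = A.radius ^ 2 := by
    rw [real_inner_self_eq_norm_sq, ← dist_eq_norm_vsub, mem_sphere.1 hq]
  have hw : ⟪w, w⟫ = B.radius ^ 2 := by
    rw [real_inner_self_eq_norm_sq, ← dist_eq_norm_vsub, mem_sphere.1 hs]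
  have hd : ⟪d, d⟫ = A.radius ^ 2 + B.radius ^ 2 := by
    rw [real_inner_self_eq_norm_sq, ← dist_eq_norm_vsub, dist_comm, hAB]
  have hv : v = d + w - u := by
    simp only [v, d, w, u]
    rw [← vsub_sub_vsub_cancel_right s q A.center, ← vsub_add_vsub_cancel s B.center A.center]
    abel
  -- also when `v = 0`, where `t = 0` by the convention `x / 0 = 0`
  have ht : t * ⟪v, v⟫ = -2 * ⟪v, u⟫ := by
    rcases eq_or_ne v 0 with h | h
    · simp [h]
    · exact div_mul_cancel₀ _ (inner_self_ne_zero.2 h)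
  have hvv : ⟪v, v⟫ = 2 * ⟪v, d⟫ := by
    rw [hv]
    simp only [inner_add_left, inner_add_right, inner_sub_left, inner_sub_right]
    linear_combination hu + hw - hd - 2 * hqs - real_inner_comm d w + real_inner_comm d u
      - real_inner_comm u w
  have hvu : ⟪v, u⟫ = ⟪d, u⟫ - A.radius ^ 2 := by
    rw [hv, inner_sub_left, inner_add_left, real_inner_comm u w, hqs, hu, add_zero]
  have hr : A.secondInter q v -ᵥ B.center = t • v + (u - d) := by
    rw [secondInter, vadd_vsub_assoc, ← vsub_sub_vsub_cancel_right q B.center A.center]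
  rw [mem_sphere, ← mem_sphere.1 hs, dist_eq_norm_vsub V, dist_eq_norm_vsub V, hr,
    ← sq_eq_sq₀ (norm_nonneg _) (norm_nonneg _), ← real_inner_self_eq_norm_sq,
    ← real_inner_self_eq_norm_sq]
  simp only [inner_add_left, inner_add_right, inner_sub_left, inner_sub_right, inner_smul_left,
    inner_smul_right, RCLike.conj_to_real]
  linear_combination (t - 1) * ht + t * hvv + 2 * hvu + hu + hd - hw
    - t * real_inner_comm u v + t * real_inner_comm d v + real_inner_comm u d

end EuclideanGeometry.Sphere

theorem stmt_1_general (a b q s : EuclideanSpace ℝ (Fin 2)) (α β : ℝ)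
    (horth : dist a b ^ 2 = α ^ 2 + β ^ 2)
    (hqA : dist q a = α) (hq0 : q 0 = a 0)
    (hsB : dist s b = β) (hs1 : s 1 = b 1) :
    ∃ r : EuclideanSpace ℝ (Fin 2), dist r a = α ∧ dist r b = β ∧
      Collinear ℝ ({q, r, s} : Set (EuclideanSpace ℝ (Fin 2))) := by
  let A : Sphere (EuclideanSpace ℝ (Fin 2)) := ⟨a, α⟩
  let B : Sphere (EuclideanSpace ℝ (Fin 2)) := ⟨b, β⟩
  have hAB : A.IsOrthogonal_s1 B := horth
  have hq : q ∈ A := mem_sphere.2 hqA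
  have hqs : ⟪q -ᵥ a, s -ᵥ b⟫ = 0 := by
    simp [PiLp.inner_apply, Fin.sum_univ_two, hq0, hs1]
  refine ⟨A.secondInter q (s -ᵥ q), (Sphere.secondInter_mem _).2 hq,
    Sphere.secondInter_mem_of_isOrthogonal hAB hq (mem_sphere.2 hsB) hqs, ?_⟩
  rw [Set.pair_comm]
  exact A.secondInter_collinear q s

/-- Inverted form of the key step of the quadrilateral-circumcircle lemma:
for orthogonal circles `A` (center `a`, radius `α`) and `B` (center `b`,
radius `β`), a point `q` of `A` vertically above/below `a` and a point `s` of
`B` horizontally displaced from `b` are collinear with some common point `r`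
of the two circles. -/
theorem stmt_1 (a b q s : EuclideanSpace ℝ (Fin 2)) (α β : ℝ)
    (hα : 0 < α) (hβ : 0 < β)
    (horth : dist a b ^ 2 = α ^ 2 + β ^ 2)
    (hqA : dist q a = α) (hq0 : q 0 = a 0)
    (hsB : dist s b = β) (hs1 : s 1 = b 1) :
    ∃ r : EuclideanSpace ℝ (Fin 2), dist r a = α ∧ dist r b = β ∧
      Collinear ℝ ({q, r, s} : Set (EuclideanSpace ℝ (Fin 2))) :=
  stmt_1_general a b q s α β horth hqA hq0 hsB hs1
end

section
/- Let A and B be orthogonal circles in the Euclidean plane, with centers a, b and radii α, β > 0 satisfying dist a b ^ 2 = α^2 + β^2. Then there exist a point c and a radius ρ > 0 such that every common point p of A and B (dist p a = α and dist p b = β) satisfies dist p c = ρ, InnerProductGeometry.angle (p - a) (p - c) = π/4, and InnerProductGeometry.angle (p - b) (p - c) = π/4. In other words, there is a circle through both intersection points of A and B that makes a 45° angle with each of A and B at those points. -/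
/-!
At a common point `p` the radius vectors `u = p - a` and `v = p - b` are orthogonal, since
`‖u - v‖² = ‖a - b‖² = ‖u‖² + ‖v‖²`. Hence `‖v‖ • u + ‖u‖ • v` bisects the right angle between
them, and it equals `(α + β) • (p - c)` for the weighted center `c = (β • a + α • b) / (α + β)`,
which does not depend on `p`; its length `√2 α β` is the same at both common points.
-/

open Real RealInnerProductSpace InnerProductGeometry

section InnerProductSpace

variable {V : Type*} [NormedAddCommGroup V] [InnerProductSpace ℝ V]

theorem angle_norm_smul_add_norm_smul_of_inner_eq_zero {u v : V} (h : ⟪u, v⟫ = 0)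
    (hu : u ≠ 0) (hv : v ≠ 0) : angle u (‖v‖ • u + ‖u‖ • v) = π / 4 := by
  have hu' : 0 < ‖u‖ := norm_pos_iff.2 hu
  have hv' : 0 < ‖v‖ := norm_pos_iff.2 hv
  have horth : ⟪‖v‖ • u, ‖u‖ • v⟫ = 0 := by
    rw [real_inner_smul_left, real_inner_smul_right, h, mul_zero, mul_zero]
  rw [← angle_smul_left_of_pos u _ hv',
    angle_add_eq_arctan_of_inner_eq_zero horth (smul_ne_zero hv'.ne' hu),
    norm_smul, norm_smul, norm_norm, norm_norm, mul_comm, div_self (by positivity),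
    arctan_one]

theorem norm_norm_smul_add_norm_smul_of_inner_eq_zero {u v : V} (h : ⟪u, v⟫ = 0) :
    ‖‖v‖ • u + ‖u‖ • v‖ = √2 * (‖u‖ * ‖v‖) := by
  have horth : ⟪‖v‖ • u, ‖u‖ • v⟫ = 0 := by
    rw [real_inner_smul_left, real_inner_smul_right, h, mul_zero, mul_zero]
  rw [norm_add_eq_sqrt_iff_real_inner_eq_zero.2 horth, norm_smul, norm_smul, norm_norm,
    norm_norm, show ‖v‖ * ‖u‖ * (‖v‖ * ‖u‖) + ‖u‖ * ‖v‖ * (‖u‖ * ‖v‖) = 2 * (‖u‖ * ‖v‖) ^ 2 by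
      ring, sqrt_mul zero_le_two, sqrt_sq (by positivity)]

theorem inner_sub_sub_eq_zero_of_dist_sq {p a b : V}
    (h : dist a b ^ 2 = dist p a ^ 2 + dist p b ^ 2) : ⟪p - a, p - b⟫ = 0 := by
  rw [← norm_sub_sq_eq_norm_sq_add_norm_sq_iff_real_inner_eq_zero, sub_sub_sub_cancel_left,
    ← dist_eq_norm, ← dist_eq_norm, ← dist_eq_norm, dist_comm b a]
  simpa only [sq] using h

end InnerProductSpace

/-- For orthogonal circles `A` and `B` there is a circle through both of
their common points making a 45° angle with each of them there. -/
theorem stmt_3 (a b : EuclideanSpace ℝ (Fin 2)) (α β : ℝ)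
    (hα : 0 < α) (hβ : 0 < β)
    (horth : dist a b ^ 2 = α ^ 2 + β ^ 2) :
    ∃ (c : EuclideanSpace ℝ (Fin 2)) (ρ : ℝ), 0 < ρ ∧
      ∀ p : EuclideanSpace ℝ (Fin 2), dist p a = α → dist p b = β →
        dist p c = ρ ∧
          InnerProductGeometry.angle (p - a) (p - c) = π / 4 ∧
          InnerProductGeometry.angle (p - b) (p - c) = π / 4 := by
  have hαβ : 0 < α + β := add_pos hα hβ
  refine ⟨(α + β)⁻¹ • (β • a + α • b), √2 * (α * β) / (α + β), by positivity, ?_⟩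
  intro p hpa hpb
  have hinner : ⟪p - a, p - b⟫ = 0 := inner_sub_sub_eq_zero_of_dist_sq (by rwa [hpa, hpb])
  rw [dist_eq_norm] at hpa hpb
  have hpc : p - (α + β)⁻¹ • (β • a + α • b)
      = (α + β)⁻¹ • (‖p - b‖ • (p - a) + ‖p - a‖ • (p - b)) := by
    rw [hpa, hpb, eq_inv_smul_iff₀ hαβ.ne', smul_sub, smul_inv_smul₀ hαβ.ne']
    module
  have hu : p - a ≠ 0 := norm_pos_iff.1 (hpa ▸ hα)
  have hv : p - b ≠ 0 := norm_pos_iff.1 (hpb ▸ hβ)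
  refine ⟨?_, ?_, ?_⟩
  · rw [dist_eq_norm, hpc, norm_smul, norm_norm_smul_add_norm_smul_of_inner_eq_zero hinner,
      hpa, hpb, norm_inv, norm_of_nonneg hαβ.le, inv_mul_eq_div]
  · rw [hpc, angle_smul_right_of_pos _ _ (inv_pos.2 hαβ),
      angle_norm_smul_add_norm_smul_of_inner_eq_zero hinner hu hv]
  · rw [hpc, angle_smul_right_of_pos _ _ (inv_pos.2 hαβ), add_comm,
      angle_norm_smul_add_norm_smul_of_inner_eq_zero (real_inner_comm (p - a) _ ▸ hinner) hv hu]
end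

section
/- Let A, B, C be three affinely independent points in the Euclidean plane. Then there exists a point X such that dist X A * dist B C = dist X B * dist A C and dist X B * dist A C = dist X C * dist A B; that is, a point whose distances to the three vertices are inversely proportional to the lengths of the opposite sides (an isodynamic point of the triangle). -/
/-!
Identify the plane with `ℂ`. For `u = (x - a) * (b - c)` and `w = (x - c) * (a - b)` one has
`(x - b) * (a - c) = u + w`, so `x` is isodynamic for `a, b, c` as soon as `w = t * u` with
`‖t‖ = ‖1 + t‖ = 1`, i.e. `t` a primitive cube root of unity. This is a linear equation in `x`,
solvable unless `a - b = t * (b - c)`; that cannot happen for both cube roots unless `b = c`,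
and then `x = b` works trivially.
-/

def IsIsodynamic {P : Type*} [MetricSpace P] (X A B C : P) : Prop :=
  dist X A * dist B C = dist X B * dist A C ∧ dist X B * dist A C = dist X C * dist A B

theorem IsIsodynamic.map {P Q : Type*} [MetricSpace P] [MetricSpace Q] {f : P → Q}
    (hf : Isometry f) {X A B C : P} (h : IsIsodynamic X A B C) :
    IsIsodynamic (f X) (f A) (f B) (f C) := by
  simpa only [IsIsodynamic, hf.dist_eq] using h

section NormedField

variable {K : Type*} [NormedField K]

theorem isIsodynamic_of_mul_eq {a b c x t : K} (ht : ‖t‖ = 1) (ht' : ‖1 + t‖ = 1)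
    (h : (x - c) * (a - b) = t * ((x - a) * (b - c))) : IsIsodynamic x a b c := by
  have hB : (x - b) * (a - c) = (1 + t) * ((x - a) * (b - c)) := by linear_combination h
  have dA : dist x a * dist b c = ‖(x - a) * (b - c)‖ := by
    rw [dist_eq_norm, dist_eq_norm, norm_mul]
  have dB : dist x b * dist a c = ‖(x - a) * (b - c)‖ := by
    rw [dist_eq_norm, dist_eq_norm, ← norm_mul, hB, norm_mul, ht', one_mul]
  have dC : dist x c * dist a b = ‖(x - a) * (b - c)‖ := by
    rw [dist_eq_norm, dist_eq_norm, ← norm_mul, h, norm_mul, ht, one_mul]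
  exact ⟨dA.trans dB.symm, dB.trans dC.symm⟩

theorem exists_isIsodynamic_of_ne_zero {a b c t : K} (ht : ‖t‖ = 1) (ht' : ‖1 + t‖ = 1)
    (hd : a - b - t * (b - c) ≠ 0) : ∃ x, IsIsodynamic x a b c :=
  ⟨(c * (a - b) - t * a * (b - c)) / (a - b - t * (b - c)),
    isIsodynamic_of_mul_eq ht ht' (by field_simp; ring)⟩

end NormedField

theorem Complex.norm_mk_neg_half_of_sq_eq_three {s : ℝ} (hs : s ^ 2 = 3) :
    ‖(⟨-(1 / 2), s / 2⟩ : ℂ)‖ = 1 ∧ ‖1 + (⟨-(1 / 2), s / 2⟩ : ℂ)‖ = 1 := by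
  have h1 : (1 + (⟨-(1 / 2), s / 2⟩ : ℂ)) = ⟨1 / 2, s / 2⟩ := by
    apply Complex.ext <;> norm_num
  rw [h1, Complex.norm_def, Complex.norm_def, Complex.normSq_mk, Complex.normSq_mk,
    Real.sqrt_eq_one, Real.sqrt_eq_one]
  constructor <;> linear_combination hs / 4

theorem Complex.exists_isIsodynamic (a b c : ℂ) : ∃ x, IsIsodynamic x a b c := by
  by_cases hbc : b = c
  · subst hbc
    exact ⟨b, by simp [IsIsodynamic]⟩
  obtain ⟨hω, hω_add⟩ := norm_mk_neg_half_of_sq_eq_three (s := √3) (by simp)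
  obtain ⟨hω', hω'_add⟩ := norm_mk_neg_half_of_sq_eq_three (s := -√3) (by simp)
  by_cases hd : a - b - ⟨-(1 / 2), √3 / 2⟩ * (b - c) = 0
  · refine exists_isIsodynamic_of_ne_zero hω' hω'_add fun hd' => hbc ?_
    have hω_ne : (⟨-(1 / 2), √3 / 2⟩ - ⟨-(1 / 2), -√3 / 2⟩ : ℂ) ≠ 0 := by
      rw [sub_ne_zero]
      intro h
      simpa [CharZero.eq_neg_self_iff] using congrArg Complex.im h
    have : (⟨-(1 / 2), √3 / 2⟩ - ⟨-(1 / 2), -√3 / 2⟩ : ℂ) * (b - c) = 0 := by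
      linear_combination hd' - hd
    exact sub_eq_zero.mp ((mul_eq_zero.mp this).resolve_left hω_ne)
  · exact exists_isIsodynamic_of_ne_zero hω hω_add hd

theorem stmt_4_general (A B C : EuclideanSpace ℝ (Fin 2)) :
    ∃ X : EuclideanSpace ℝ (Fin 2),
      dist X A * dist B C = dist X B * dist A C ∧
      dist X B * dist A C = dist X C * dist A B := by
  let e := Complex.orthonormalBasisOneI.repr
  obtain ⟨x, hx⟩ := Complex.exists_isIsodynamic (e.symm A) (e.symm B) (e.symm C)
  have hX := hx.map e.isometry
  simp only [e.apply_symm_apply] at hX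
  exact ⟨e x, hX⟩

/-- Every triangle has an isodynamic point: a point whose distances to the
vertices are inversely proportional to the opposite side lengths. -/
theorem stmt_4 (A B C : EuclideanSpace ℝ (Fin 2))
    (hABC : AffineIndependent ℝ ![A, B, C]) :
    ∃ X : EuclideanSpace ℝ (Fin 2),
      dist X A * dist B C = dist X B * dist A C ∧
      dist X B * dist A C = dist X C * dist A B :=
  stmt_4_general A B C
end

section
/- Let A, B, C be three affinely independent points in the Euclidean plane, let a = dist B C, b = dist A C, c = dist A B be the side lengths, and let α = ∠ B A C, β = ∠ A B C, γ = ∠ A C B be the (unoriented) interior angles. Define the barycentric weights wA = a * Real.sin (α + π/3), wB = b * Real.sin (β + π/3), wC = c * Real.sin (γ + π/3). Then wA + wB + wC > 0, and the point X = (wA + wB + wC)⁻¹ • (wA • A + wB • B + wC • C) (the affine combination of A, B, C with these weights, the points being regarded as vectors of EuclideanSpace ℝ (Fin 2)) satisfies a * dist X A = b * dist X B and b * dist X B = c * dist X C. -/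
open Real EuclideanGeometry

/-!
In Conway's notation (`S` twice the area, `S_A = (b² + c² - a²) / 2 = b c cos α`), one has
`a sin (α + π/3) = a² (S + √3 S_A) / (2abc)`. For any barycentric weights `w` with sum `W`,
`W² |XA|² = W (w_B c² + w_C b²) - (w_B w_C a² + w_C w_A b² + w_A w_B c²)`. For the weights
`a² (S + √3 S_A)` the quadratic term equals `√3 a²b²c² W`, because
`S² = S_A S_B + S_B S_C + S_C S_A`; substituting gives `a² |XA|² = abc S / W`, which is symmetric
in the three vertices.
-/

/-- `S` plays the role of twice the area of the triangle with sides `a`, `b`, `c`. -/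
noncomputable def isodynamicWeight (S a b c : ℝ) : ℝ :=
  a ^ 2 * (S + √3 * ((b ^ 2 + c ^ 2 - a ^ 2) / 2))

section Algebra

variable {S a b c : ℝ}

theorem isodynamicWeight_sum (hS : S ^ 2 = b ^ 2 * c ^ 2 - ((b ^ 2 + c ^ 2 - a ^ 2) / 2) ^ 2) :
    isodynamicWeight S a b c + isodynamicWeight S b c a + isodynamicWeight S c a b =
      S * (a ^ 2 + b ^ 2 + c ^ 2 + 2 * √3 * S) := by
  unfold isodynamicWeight
  linear_combination (-2 * √3) * hS

theorem isodynamicWeight_cross_sum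
    (hS : S ^ 2 = b ^ 2 * c ^ 2 - ((b ^ 2 + c ^ 2 - a ^ 2) / 2) ^ 2) :
    isodynamicWeight S b c a * isodynamicWeight S c a b * a ^ 2 +
        isodynamicWeight S c a b * isodynamicWeight S a b c * b ^ 2 +
        isodynamicWeight S a b c * isodynamicWeight S b c a * c ^ 2 =
      √3 * (a * b * c) ^ 2 *
        (isodynamicWeight S a b c + isodynamicWeight S b c a + isodynamicWeight S c a b) := by
  have h3 : √3 ^ 2 = 3 := Real.sq_sqrt (by norm_num)
  unfold isodynamicWeight
  linear_combination (-(a * b * c) ^ 2 * (b ^ 2 * c ^ 2 - ((b ^ 2 + c ^ 2 - a ^ 2) / 2) ^ 2)) * h3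
    + 3 * (a * b * c) ^ 2 * hS

end Algebra

section Triangle

variable {V P : Type*} [NormedAddCommGroup V] [InnerProductSpace ℝ V] [MetricSpace P]
  [NormedAddTorsor V P]

theorem dist_mul_dist_mul_cos_angle (A B C : P) :
    dist A B * dist A C * cos (∠ B A C) = (dist A B ^ 2 + dist A C ^ 2 - dist B C ^ 2) / 2 := by
  have h := law_cos B A C
  rw [dist_comm B A, dist_comm C A] at h
  linear_combination h / 2

theorem sq_dist_mul_dist_mul_sin_angle (A B C : P) :
    (dist A B * dist A C * sin (∠ B A C)) ^ 2 =
      dist A B ^ 2 * dist A C ^ 2 - ((dist A B ^ 2 + dist A C ^ 2 - dist B C ^ 2) / 2) ^ 2 := by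
  rw [← dist_mul_dist_mul_cos_angle]
  linear_combination (dist A B * dist A C) ^ 2 * sin_sq_add_cos_sq (∠ B A C)

theorem two_mul_dist_mul_dist_mul_sin_angle_add_pi_div_three (A B C : P) :
    2 * (dist A B * dist A C) * sin (∠ B A C + π / 3) =
      dist A B * dist A C * sin (∠ B A C) +
        √3 * ((dist A B ^ 2 + dist A C ^ 2 - dist B C ^ 2) / 2) := by
  rw [sin_add, cos_pi_div_three, sin_pi_div_three, ← dist_mul_dist_mul_cos_angle]
  ring

theorem exists_isodynamicWeight {A B C : P} (hT : ¬Collinear ℝ {A, B, C}) :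
    ∃ S m : ℝ, 0 < S ∧ 0 < m ∧
      S ^ 2 = dist A C ^ 2 * dist A B ^ 2 -
        ((dist A C ^ 2 + dist A B ^ 2 - dist B C ^ 2) / 2) ^ 2 ∧
      dist B C * sin (∠ B A C + π / 3) =
        m * isodynamicWeight S (dist B C) (dist A C) (dist A B) ∧
      dist A C * sin (∠ A B C + π / 3) =
        m * isodynamicWeight S (dist A C) (dist A B) (dist B C) ∧
      dist A B * sin (∠ A C B + π / 3) =
        m * isodynamicWeight S (dist A B) (dist B C) (dist A C) := by
  set a := dist B C
  set b := dist A C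
  set c := dist A B
  have ha : 0 < a := dist_pos.2 (ne₂₃_of_not_collinear hT)
  have hb : 0 < b := dist_pos.2 (ne₁₃_of_not_collinear hT)
  have hc : 0 < c := dist_pos.2 (ne₁₂_of_not_collinear hT)
  have habc : 0 < 2 * (a * b * c) := by positivity
  have hsinα : 0 < sin (∠ B A C) := sin_pos_of_not_collinear (by rwa [Set.insert_comm])
  -- the law of sines makes `c b sin α` the same at every vertex
  have hSB : c * a * sin (∠ A B C) = c * b * sin (∠ B A C) := by
    have h : sin (∠ A B C) * a = sin (∠ B A C) * b :=
      (law_sin A B C).trans (by rw [angle_comm, dist_comm])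
    linear_combination c * h
  have hSC : b * a * sin (∠ A C B) = c * b * sin (∠ B A C) := by
    have h : sin (∠ A C B) * b = sin (∠ A B C) * c := by
      rw [angle_comm, show b = dist C A from dist_comm ..]
      exact law_sin B C A
    linear_combination a * h + hSB
  refine ⟨c * b * sin (∠ B A C), (2 * (a * b * c))⁻¹, by positivity, inv_pos.2 habc,
    by linear_combination sq_dist_mul_dist_mul_sin_angle A B C, ?_, ?_, ?_⟩
  all_goals rw [eq_inv_mul_iff_mul_eq₀ habc.ne', isodynamicWeight]
  · have h := two_mul_dist_mul_dist_mul_sin_angle_add_pi_div_three A B C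
    linear_combination a ^ 2 * h
  · have h := two_mul_dist_mul_dist_mul_sin_angle_add_pi_div_three B A C
    rw [dist_comm B A] at h
    linear_combination b ^ 2 * h + b ^ 2 * hSB
  · have h := two_mul_dist_mul_dist_mul_sin_angle_add_pi_div_three C A B
    rw [dist_comm C A, dist_comm C B] at h
    linear_combination c ^ 2 * h + c ^ 2 * hSC

end Triangle

section Barycentric

variable {V : Type*} [NormedAddCommGroup V] [InnerProductSpace ℝ V]

theorem sq_mul_dist_sq_of_eq_barycentric {A B C X : V} {wA wB wC : ℝ} (hW : wA + wB + wC ≠ 0)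
    (hX : X = (wA + wB + wC)⁻¹ • (wA • A + wB • B + wC • C)) :
    (wA + wB + wC) ^ 2 * dist X A ^ 2 =
      (wA + wB + wC) * (wB * dist A B ^ 2 + wC * dist A C ^ 2) -
        (wB * wC * dist B C ^ 2 + wC * wA * dist A C ^ 2 + wA * wB * dist A B ^ 2) := by
  have hXA : (wA + wB + wC) • (X - A) = wB • (B - A) + wC • (C - A) := by
    rw [hX, smul_sub, smul_smul, mul_inv_cancel₀ hW, one_smul]
    module
  have hBC : dist B C ^ 2 = ‖B - A‖ ^ 2 - 2 * inner ℝ (B - A) (C - A) + ‖C - A‖ ^ 2 := by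
    rw [← norm_sub_sq_real, sub_sub_sub_cancel_right, dist_eq_norm]
  calc (wA + wB + wC) ^ 2 * dist X A ^ 2 = ‖(wA + wB + wC) • (X - A)‖ ^ 2 := by
        rw [norm_smul, mul_pow, Real.norm_eq_abs, sq_abs, dist_eq_norm]
    _ = ‖wB • (B - A) + wC • (C - A)‖ ^ 2 := by rw [hXA]
    _ = _ := by
      rw [norm_add_sq_real, norm_smul, norm_smul, real_inner_smul_left, real_inner_smul_right,
        dist_comm A B, dist_comm A C, dist_eq_norm, dist_eq_norm, hBC, Real.norm_eq_abs,
        Real.norm_eq_abs]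
      linear_combination (sq_abs wB) * ‖B - A‖ ^ 2 + (sq_abs wC) * ‖C - A‖ ^ 2

theorem sq_mul_dist_eq_of_isodynamicWeight {A B C X : V} {S m a b c wA wB wC : ℝ}
    (ha : dist B C = a) (hb : dist A C = b) (hc : dist A B = c)
    (hS : S ^ 2 = b ^ 2 * c ^ 2 - ((b ^ 2 + c ^ 2 - a ^ 2) / 2) ^ 2)
    (hwA : wA = m * isodynamicWeight S a b c) (hwB : wB = m * isodynamicWeight S b c a)
    (hwC : wC = m * isodynamicWeight S c a b) (hW : wA + wB + wC ≠ 0)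
    (hX : X = (wA + wB + wC)⁻¹ • (wA • A + wB • B + wC • C)) :
    (a * dist X A) ^ 2 = 2 * m * (a * b * c) ^ 2 * S / (wA + wB + wC) := by
  have hbary := sq_mul_dist_sq_of_eq_barycentric hW hX
  have hcross := isodynamicWeight_cross_sum hS
  rw [ha, hb, hc] at hbary
  rw [eq_div_iff hW]
  refine mul_left_cancel₀ hW ?_
  subst hwA hwB hwC
  unfold isodynamicWeight at *
  linear_combination a ^ 2 * hbary - m ^ 2 * a ^ 2 * hcross

end Barycentric

/-- The first isodynamic point as a barycentric combination with weights
`a·sin(α + π/3) : b·sin(β + π/3) : c·sin(γ + π/3)`. -/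
theorem stmt_5 (A B C : EuclideanSpace ℝ (Fin 2))
    (hABC : AffineIndependent ℝ ![A, B, C]) :
    let a := dist B C
    let b := dist A C
    let c := dist A B
    let α := ∠ B A C
    let β := ∠ A B C
    let γ := ∠ A C B
    let wA := a * Real.sin (α + π / 3)
    let wB := b * Real.sin (β + π / 3)
    let wC := c * Real.sin (γ + π / 3)
    let X := (wA + wB + wC)⁻¹ • (wA • A + wB • B + wC • C)
    0 < wA + wB + wC ∧
      a * dist X A = b * dist X B ∧ b * dist X B = c * dist X C := by
  intro a b c α β γ wA wB wC X
  obtain ⟨S, m, hS0, hm, hS, hwA, hwB, hwC⟩ :=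
    exists_isodynamicWeight (affineIndependent_iff_not_collinear_set.1 hABC)
  have hW : 0 < wA + wB + wC := by
    simp only [wA, wB, wC, a, b, c, α, β, γ]
    rw [hwA, hwB, hwC, ← mul_add, ← mul_add, isodynamicWeight_sum hS]
    exact mul_pos hm (mul_pos hS0 (add_pos_of_nonneg_of_pos (by positivity) (by positivity)))
  have hXA := sq_mul_dist_eq_of_isodynamicWeight rfl rfl rfl hS hwA hwB hwC hW.ne' rfl
  have hXB := sq_mul_dist_eq_of_isodynamicWeight (A := B) (B := C) (C := A) (a := b) (b := c)
    (c := a) (dist_comm C A) (dist_comm B A) rfl (by linear_combination hS) hwB hwC hwA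
    (by rw [← add_rotate]; exact hW.ne') (by rw [← add_rotate wA, ← add_rotate (wA • A)])
  have hXC := sq_mul_dist_eq_of_isodynamicWeight (A := C) (B := A) (C := B) (a := c) (b := a)
    (c := b) rfl (dist_comm C B) (dist_comm C A) (by linear_combination hS) hwC hwA hwB
    (by rw [add_rotate]; exact hW.ne') (by rw [add_rotate wC, add_rotate (wC • C)])
  refine ⟨hW, (sq_eq_sq₀ (by positivity) (by positivity)).1 ?_,
    (sq_eq_sq₀ (by positivity) (by positivity)).1 ?_⟩
  · rw [hXA, hXB]
    ring
  · rw [hXB, hXC]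
    ring
end

section
/- Let A, B, C be three affinely independent points in the Euclidean plane, let a = dist B C, b = dist A C, c = dist A B be the side lengths, and let α = ∠ B A C, β = ∠ A B C, γ = ∠ A C B be the (unoriented) interior angles. Define the barycentric weights wA = a * Real.sin (α - π/3), wB = b * Real.sin (β - π/3), wC = c * Real.sin (γ - π/3), and assume wA + wB + wC ≠ 0. Then the point X = (wA + wB + wC)⁻¹ • (wA • A + wB • B + wC • C) (the affine combination of A, B, C with these weights, the points being regarded as vectors of EuclideanSpace ℝ (Fin 2)) satisfies a * dist X A = b * dist X B and b * dist X B = c * dist X C. -/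
/-!
By Lagrange's formula, the barycentre `X` of points `P_i` with weights `w_i` of sum `W` satisfies
`W² XP² = W ∑ w_i P_iP² - ∑_{i<j} w_i w_j P_iP_j²` for every point `P`. With `T = 2bc sin α`
(four times the area) and the law of cosines, `4abc · a sin (α - π/3) = a² (T - √3 (b² + c² - a²))`,
and cyclically. For these weights Lagrange's formula gives
`a² XA² = b² XB² = c² XC² = 2a²b²c²T / (4abc W)`, a polynomial identity modulo `√3² = 3` and
Heron's relation `T² = 2(a²b² + b²c² + c²a²) - (a⁴ + b⁴ + c⁴)`.
-/

open Real EuclideanGeometry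

theorem isodynamic_weights_identity {x y z s T u v w : ℝ} (hs : s ^ 2 = 3)
    (hT : T ^ 2 = 2 * (x * y + y * z + z * x) - (x ^ 2 + y ^ 2 + z ^ 2))
    (hu : u = x * (T - s * (y + z - x))) (hv : v = y * (T - s * (z + x - y)))
    (hw : w = z * (T - s * (x + y - z))) :
    x * ((u + v + w) * (v * z + w * y) - (u * v * z + v * w * x + u * w * y)) =
      2 * x * y * z * T * (u + v + w) := by
  subst hu hv hw
  linear_combination x ^ 2 * y * z * (T ^ 2 * hs - s ^ 2 * hT)

section Triangle

variable {V P : Type*} [NormedAddCommGroup V] [InnerProductSpace ℝ V] [MetricSpace P]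
  [NormedAddTorsor V P]

theorem sq_two_mul_dist_mul_dist_mul_sin_angle (A B C : P) :
    (2 * dist A B * dist A C * sin (∠ B A C)) ^ 2 =
      2 * (dist B C ^ 2 * dist A C ^ 2 + dist A C ^ 2 * dist A B ^ 2 +
        dist A B ^ 2 * dist B C ^ 2) - (dist B C ^ 4 + dist A C ^ 4 + dist A B ^ 4) := by
  have hcos := law_cos B A C
  rw [dist_comm B A, dist_comm C A] at hcos
  linear_combination (4 * dist A B ^ 2 * dist A C ^ 2) * sin_sq_add_cos_sq (∠ B A C) +
    (-(2 * dist A B * dist A C * cos (∠ B A C) + dist A B ^ 2 + dist A C ^ 2 - dist B C ^ 2)) * hcos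

theorem four_mul_dist_mul_dist_mul_dist_mul_sin_angle_sub_pi_div_three (A B C : P) :
    4 * dist B C * dist A B * dist A C * (dist B C * sin (∠ B A C - π / 3)) =
      dist B C ^ 2 * (2 * dist A B * dist A C * sin (∠ B A C) -
        √3 * (dist A C ^ 2 + dist A B ^ 2 - dist B C ^ 2)) := by
  have hcos := law_cos B A C
  rw [dist_comm B A, dist_comm C A] at hcos
  rw [sin_sub, sin_pi_div_three, cos_pi_div_three]
  linear_combination (-√3 * dist B C ^ 2) * hcos

end Triangle

section Barycentric

open RealInnerProductSpace

variable {V : Type*} [NormedAddCommGroup V] [InnerProductSpace ℝ V]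

theorem sq_mul_dist_barycenter_sq (wA wB wC : ℝ) (A B C P : V) (hW : wA + wB + wC ≠ 0) :
    (wA + wB + wC) ^ 2 * dist ((wA + wB + wC)⁻¹ • (wA • A + wB • B + wC • C)) P ^ 2 =
      (wA + wB + wC) * (wA * dist A P ^ 2 + wB * dist B P ^ 2 + wC * dist C P ^ 2) -
        (wA * wB * dist A B ^ 2 + wB * wC * dist B C ^ 2 + wA * wC * dist A C ^ 2) := by
  set W := wA + wB + wC
  have hdisp : W • (W⁻¹ • (wA • A + wB • B + wC • C) - P) =
      wA • (A - P) + wB • (B - P) + wC • (C - P) := by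
    rw [smul_sub, smul_inv_smul₀ hW]; module
  have hpol : ∀ U U' : V, 2 * ⟪U, U'⟫ = ‖U‖ ^ 2 + ‖U'‖ ^ 2 - ‖U - U'‖ ^ 2 := fun U U' => by
    rw [norm_sub_sq_real]; ring
  have hAB := hpol (A - P) (B - P)
  have hBC := hpol (B - P) (C - P)
  have hAC := hpol (A - P) (C - P)
  simp only [sub_sub_sub_cancel_right] at hAB hBC hAC
  simp only [dist_eq_norm]
  rw [← sq_abs W, ← Real.norm_eq_abs, ← mul_pow, ← norm_smul, hdisp, ← real_inner_self_eq_norm_sq]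
  simp only [inner_add_left, inner_add_right, real_inner_smul_left, real_inner_smul_right]
  simp only [real_inner_self_eq_norm_sq]
  rw [real_inner_comm (A - P) (B - P), real_inner_comm (A - P) (C - P),
    real_inner_comm (B - P) (C - P)]
  linear_combination wA * wB * hAB + wB * wC * hBC + wA * wC * hAC

theorem mul_dist_eq_mul_dist_of_isodynamic_weights {A B C X : V} {a b c s T k wA wB wC : ℝ}
    (ha : dist B C = a) (hb : dist A C = b) (hc : dist A B = c) (hs : s ^ 2 = 3)
    (hT : T ^ 2 = 2 * (a ^ 2 * b ^ 2 + b ^ 2 * c ^ 2 + c ^ 2 * a ^ 2) - (a ^ 4 + b ^ 4 + c ^ 4))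
    (hk : k ≠ 0) (hW : wA + wB + wC ≠ 0)
    (hwA : k * wA = a ^ 2 * (T - s * (b ^ 2 + c ^ 2 - a ^ 2)))
    (hwB : k * wB = b ^ 2 * (T - s * (c ^ 2 + a ^ 2 - b ^ 2)))
    (hwC : k * wC = c ^ 2 * (T - s * (a ^ 2 + b ^ 2 - c ^ 2)))
    (hX : X = (wA + wB + wC)⁻¹ • (wA • A + wB • B + wC • C)) :
    a * dist X A = b * dist X B ∧ b * dist X B = c * dist X C := by
  have idA := isodynamic_weights_identity hs (by linear_combination hT) hwA hwB hwC
  have idB := isodynamic_weights_identity hs (by linear_combination hT) hwB hwC hwA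
  have idC := isodynamic_weights_identity hs (by linear_combination hT) hwC hwA hwB
  have lA := sq_mul_dist_barycenter_sq wA wB wC A B C A hW
  have lB := sq_mul_dist_barycenter_sq wA wB wC A B C B hW
  have lC := sq_mul_dist_barycenter_sq wA wB wC A B C C hW
  rw [← hX] at lA lB lC
  subst ha hb hc
  simp only [dist_self, dist_comm B A, dist_comm C A, dist_comm C B] at lA lB lC
  have hkW : k * (wA + wB + wC) ≠ 0 := mul_ne_zero hk hW
  have hA : dist B C ^ 2 * dist X A ^ 2 * (k * (wA + wB + wC)) =
      2 * dist B C ^ 2 * dist A C ^ 2 * dist A B ^ 2 * T := by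
    refine mul_left_cancel₀ hkW ?_
    linear_combination (k ^ 2 * dist B C ^ 2) * lA + idA
  have hB : dist A C ^ 2 * dist X B ^ 2 * (k * (wA + wB + wC)) =
      2 * dist B C ^ 2 * dist A C ^ 2 * dist A B ^ 2 * T := by
    refine mul_left_cancel₀ hkW ?_
    linear_combination (k ^ 2 * dist A C ^ 2) * lB + idB
  have hC : dist A B ^ 2 * dist X C ^ 2 * (k * (wA + wB + wC)) =
      2 * dist B C ^ 2 * dist A C ^ 2 * dist A B ^ 2 * T := by
    refine mul_left_cancel₀ hkW ?_
    linear_combination (k ^ 2 * dist A B ^ 2) * lC + idC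
  constructor
  · rw [← pow_left_inj₀ (by positivity) (by positivity) two_ne_zero]
    exact mul_right_cancel₀ hkW (by linear_combination hA - hB)
  · rw [← pow_left_inj₀ (by positivity) (by positivity) two_ne_zero]
    exact mul_right_cancel₀ hkW (by linear_combination hB - hC)

end Barycentric

/-- The second isodynamic point as a barycentric combination with weights
`a·sin(α - π/3) : b·sin(β - π/3) : c·sin(γ - π/3)`, when the weight sum is
nonzero. -/
theorem stmt_6 (A B C : EuclideanSpace ℝ (Fin 2))
    (hABC : AffineIndependent ℝ ![A, B, C]) :
    let a := dist B C
    let b := dist A C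
    let c := dist A B
    let α := ∠ B A C
    let β := ∠ A B C
    let γ := ∠ A C B
    let wA := a * Real.sin (α - π / 3)
    let wB := b * Real.sin (β - π / 3)
    let wC := c * Real.sin (γ - π / 3)
    let X := (wA + wB + wC)⁻¹ • (wA • A + wB • B + wC • C)
    wA + wB + wC ≠ 0 →
      a * dist X A = b * dist X B ∧ b * dist X B = c * dist X C := by
  intro a b c α β γ wA wB wC X hW
  have hAB : A ≠ B := by simpa using hABC.injective.ne (by decide : (0 : Fin 3) ≠ 1)
  have hAC : A ≠ C := by simpa using hABC.injective.ne (by decide : (0 : Fin 3) ≠ 2)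
  have hBC : B ≠ C := by simpa using hABC.injective.ne (by decide : (1 : Fin 3) ≠ 2)
  have hk : 4 * a * b * c ≠ 0 := by
    simp [a, b, c, hAB, hAC, hBC]
  have hsinB : sin β * a = sin α * b := by
    rw [law_sin A B C, angle_comm, dist_comm]
  have hsinC : sin γ * a = sin α * c := by
    have h := law_sin A C B
    rwa [dist_comm C B, dist_comm B A] at h
  refine mul_dist_eq_mul_dist_of_isodynamic_weights (k := 4 * a * b * c) (s := √3) rfl rfl rfl
    (sq_sqrt (by norm_num)) (sq_two_mul_dist_mul_dist_mul_sin_angle A B C) hk hW ?_ ?_ ?_ rfl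
  · linear_combination four_mul_dist_mul_dist_mul_dist_mul_sin_angle_sub_pi_div_three A B C
  · have h := four_mul_dist_mul_dist_mul_dist_mul_sin_angle_sub_pi_div_three B A C
    rw [dist_comm B A] at h
    linear_combination h + 2 * b ^ 2 * c * hsinB
  · have h := four_mul_dist_mul_dist_mul_dist_mul_sin_angle_sub_pi_div_three C A B
    rw [dist_comm C A, dist_comm C B] at h
    linear_combination h + 2 * c ^ 2 * b * hsinC
end

section
/- Let A, B, C be three affinely independent points in the Euclidean plane. Then there exist a point P with P ≠ A, P ≠ B, P ≠ C, and a radius R > 0, such that the images A' = EuclideanGeometry.inversion P R A, B' = EuclideanGeometry.inversion P R B, C' = EuclideanGeometry.inversion P R C form an equilateral triangle: dist A' B' = dist B' C', dist B' C' = dist C' A', and dist A' B' ≠ 0. -/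
/-!
An inversion centred at `P` scales `|XY|` by `R² / (|XP| |YP|)`, so the images of `A, B, C` form
an equilateral triangle exactly when `|AB| |CP| = |BC| |AP| = |CA| |BP|`, i.e. when `P` is an
isodynamic point. In complex coordinates, for a primitive cube root of unity `ω`, such a `P` is
the root of `(b - P)(c - P) + ω (a - P)(c - P) + ω² (a - P)(b - P) = 0`: this equation is linear
in `P` because `1 + ω + ω² = 0`, its leading coefficient `a + ω b + ω² c` vanishes for at most
one of `ω`, `ω²`, and taking absolute values of its rearrangements gives the three products.
-/

open EuclideanGeometry

theorem dist_inversion_inversion_eq_of_mul_eq {V P : Type*} [NormedAddCommGroup V]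
    [InnerProductSpace ℝ V] [MetricSpace P] [NormedAddTorsor V P] {c x y z : P}
    (hx : x ≠ c) (hy : y ≠ c) (hz : z ≠ c) (R : ℝ)
    (h : dist x y * dist z c = dist y z * dist x c) :
    dist (inversion c R x) (inversion c R y) = dist (inversion c R y) (inversion c R z) := by
  have hxc := dist_pos.2 hx
  have hyc := dist_pos.2 hy
  have hzc := dist_pos.2 hz
  rw [dist_inversion_inversion hx hy, dist_inversion_inversion hy hz]
  field_simp
  linear_combination R ^ 2 * h

theorem IsPrimitiveRoot.sq_add_self_add_one {R : Type*} [CommRing R] [IsDomain R] {ω : R}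
    (hω : IsPrimitiveRoot ω 3) : ω ^ 2 + ω + 1 = 0 := by
  have h := hω.geom_sum_eq_zero (by norm_num)
  simp only [Finset.sum_range_succ, Finset.sum_range_zero] at h
  linear_combination h

namespace Complex

theorem exists_mul_sub_eq {ω a b c : ℂ} (hω : ω ^ 2 + ω + 1 = 0)
    (hd : a + ω * b + ω ^ 2 * c ≠ 0) :
    ∃ P, (a - b) * (c - P) = ω ^ 2 * ((b - c) * (a - P)) ∧
      (c - a) * (b - P) = ω * ((b - c) * (a - P)) := by
  set P := -(b * c + ω * a * c + ω ^ 2 * a * b) / (a + ω * b + ω ^ 2 * c)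
  have hPd : P * (a + ω * b + ω ^ 2 * c) = -(b * c + ω * a * c + ω ^ 2 * a * b) :=
    div_mul_cancel₀ _ hd
  have hF : (b - P) * (c - P) + ω * (a - P) * (c - P) + ω ^ 2 * (a - P) * (b - P) = 0 := by
    linear_combination hPd + (P ^ 2 - P * (a + b + c)) * hω
  exact ⟨P, by linear_combination -hF + ((a - P) * (c - P)) * hω,
    by linear_combination hF - ((a - P) * (b - P)) * hω⟩

theorem exists_primitive_cube_root_add_ne_zero {a b c : ℂ} (hbc : b ≠ c) :
    ∃ ω : ℂ, IsPrimitiveRoot ω 3 ∧ a + ω * b + ω ^ 2 * c ≠ 0 := by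
  obtain ⟨ω, hω⟩ : ∃ ω : ℂ, IsPrimitiveRoot ω 3 := ⟨_, isPrimitiveRoot_exp 3 (by norm_num)⟩
  by_cases hd : a + ω * b + ω ^ 2 * c = 0
  · refine ⟨ω ^ 2, hω.pow_of_coprime 2 (by norm_num), fun hd' => hbc ?_⟩
    have hω' := hω.sq_add_self_add_one
    have h3 : (ω - ω ^ 2) ^ 2 = -3 := by linear_combination (ω ^ 2 - 3 * ω + 3) * hω'
    have h : (ω - ω ^ 2) * (b - c) = 0 := by linear_combination hd - hd' + ω * (ω - 1) * c * hω'
    refine sub_eq_zero.1 ((mul_eq_zero.1 h).resolve_left fun h0 => ?_)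
    norm_num [h0] at h3
  · exact ⟨ω, hω, hd⟩

theorem exists_dist_mul_dist_eq {a b c : ℂ} (hab : a ≠ b) (hbc : b ≠ c) (hca : c ≠ a) :
    ∃ P, P ≠ a ∧ P ≠ b ∧ P ≠ c ∧
      dist a b * dist c P = dist b c * dist a P ∧ dist b c * dist a P = dist c a * dist b P := by
  obtain ⟨ω, hω, hd⟩ := exists_primitive_cube_root_add_ne_zero (a := a) hbc
  have hω0 : ω ≠ 0 := hω.ne_zero (by norm_num)
  obtain ⟨P, h₁, h₂⟩ := exists_mul_sub_eq hω.sq_add_self_add_one hd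
  have hPa : P ≠ a := by
    rintro rfl
    simp [sub_eq_zero, hab, hca] at h₁
  have hPb : P ≠ b := by
    rintro rfl
    simp [sub_eq_zero, hω0, hab, hbc] at h₂
  have hPc : P ≠ c := by
    rintro rfl
    simp [sub_eq_zero, hω0, hbc, hPa.symm] at h₁
  have hnorm := hω.norm'_eq_one (by norm_num)
  refine ⟨P, hPa, hPb, hPc, ?_, ?_⟩
  · simpa [dist_eq, hnorm] using congrArg norm h₁
  · simpa [dist_eq, hnorm] using (congrArg norm h₂).symm

end Complex

theorem EuclideanSpace.exists_dist_mul_dist_eq {A B C : EuclideanSpace ℝ (Fin 2)}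
    (hAB : A ≠ B) (hBC : B ≠ C) (hCA : C ≠ A) :
    ∃ P, P ≠ A ∧ P ≠ B ∧ P ≠ C ∧
      dist A B * dist C P = dist B C * dist A P ∧ dist B C * dist A P = dist C A * dist B P := by
  let e := Complex.orthonormalBasisOneI.repr
  obtain ⟨p, hpA, hpB, hpC, h₁, h₂⟩ := Complex.exists_dist_mul_dist_eq
    (e.symm.injective.ne hAB) (e.symm.injective.ne hBC) (e.symm.injective.ne hCA)
  obtain ⟨P, rfl⟩ := e.symm.surjective p
  simp only [ne_eq, LinearIsometryEquiv.dist_map, EmbeddingLike.apply_eq_iff_eq] at *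
  exact ⟨P, hpA, hpB, hpC, h₁, h₂⟩

/-- Every triangle may be carried to an equilateral triangle by an inversion
(centered at a point distinct from the three vertices). -/
theorem stmt_7 (A B C : EuclideanSpace ℝ (Fin 2))
    (hABC : AffineIndependent ℝ ![A, B, C]) :
    ∃ (P : EuclideanSpace ℝ (Fin 2)) (R : ℝ), 0 < R ∧
      P ≠ A ∧ P ≠ B ∧ P ≠ C ∧
      (let A' := EuclideanGeometry.inversion P R A
       let B' := EuclideanGeometry.inversion P R B
       let C' := EuclideanGeometry.inversion P R C
       dist A' B' = dist B' C' ∧ dist B' C' = dist C' A' ∧ dist A' B' ≠ 0) := by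
  have hAB : A ≠ B := by simpa using hABC.injective.ne (by decide : (0 : Fin 3) ≠ 1)
  have hBC : B ≠ C := by simpa using hABC.injective.ne (by decide : (1 : Fin 3) ≠ 2)
  have hCA : C ≠ A := by simpa using hABC.injective.ne (by decide : (2 : Fin 3) ≠ 0)
  obtain ⟨P, hPA, hPB, hPC, h₁, h₂⟩ := EuclideanSpace.exists_dist_mul_dist_eq hAB hBC hCA
  refine ⟨P, 1, one_pos, hPA, hPB, hPC,
    dist_inversion_inversion_eq_of_mul_eq hPA.symm hPB.symm hPC.symm 1 h₁,
    dist_inversion_inversion_eq_of_mul_eq hPB.symm hPC.symm hPA.symm 1 h₂,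
    dist_ne_zero.2 ((inversion_injective P one_ne_zero).ne hAB)⟩
end

section
/- Let three circles in the Euclidean plane have centers c1, c2, c3 and radii r1, r2, r3 > 0, and be pairwise externally tangent: dist c1 c2 = r1 + r2, dist c2 c3 = r2 + r3, dist c1 c3 = r1 + r3. Let t12 = (r1 + r2)⁻¹ • (r2 • c1 + r1 • c2), t23 = (r2 + r3)⁻¹ • (r3 • c2 + r2 • c3), t13 = (r1 + r3)⁻¹ • (r3 • c1 + r1 • c3) be the three pairwise tangency points. Then there exist a point o and a radius ρ > 0 such that dist o t12 = ρ, dist o t23 = ρ, dist o t13 = ρ, and the circle with center o and radius ρ is orthogonal to all three given circles: dist o c1 ^ 2 = ρ^2 + r1^2, dist o c2 ^ 2 = ρ^2 + r2^2, dist o c3 ^ 2 = ρ^2 + r3^2. -/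
/-! The orthogonal circle is the incircle of the triangle of centres, whose side lengths are
`r₁ + r₂`, `r₂ + r₃`, `r₁ + r₃`. Writing the incenter `o` as the barycentric combination of the
centres weighted by the opposite sides, the Lagrange identity for `‖p - Σ wᵢ cᵢ‖²` shows that `o`
has power `r₁ r₂ r₃ / (r₁ + r₂ + r₃)` with respect to each circle; call it `ρ²`. By Stewart's
theorem, a point with the same power `ρ²` with respect to two tangent circles is at distance `ρ`
from their tangency point. -/

open scoped RealInnerProductSpace

section

variable {V : Type*} [NormedAddCommGroup V] [InnerProductSpace ℝ V]

theorem norm_weighted_add₃_sq {w₁ w₂ w₃ : ℝ} (hw : w₁ + w₂ + w₃ = 1) (u₁ u₂ u₃ : V) :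
    ‖w₁ • u₁ + w₂ • u₂ + w₃ • u₃‖ ^ 2 =
      w₁ * ‖u₁‖ ^ 2 + w₂ * ‖u₂‖ ^ 2 + w₃ * ‖u₃‖ ^ 2 -
        (w₁ * w₂ * ‖u₁ - u₂‖ ^ 2 + w₁ * w₃ * ‖u₁ - u₃‖ ^ 2 + w₂ * w₃ * ‖u₂ - u₃‖ ^ 2) := by
  simp only [← real_inner_self_eq_norm_sq, inner_add_left, inner_add_right, inner_sub_left,
    inner_sub_right, real_inner_smul_left, real_inner_smul_right, real_inner_comm u₁ u₂,
    real_inner_comm u₁ u₃, real_inner_comm u₂ u₃]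
  linear_combination (w₁ * ⟪u₁, u₁⟫ + w₂ * ⟪u₂, u₂⟫ + w₃ * ⟪u₃, u₃⟫) * hw

theorem dist_weighted_add₃_sq {w₁ w₂ w₃ : ℝ} (hw : w₁ + w₂ + w₃ = 1) (p c₁ c₂ c₃ : V) :
    dist p (w₁ • c₁ + w₂ • c₂ + w₃ • c₃) ^ 2 =
      w₁ * dist p c₁ ^ 2 + w₂ * dist p c₂ ^ 2 + w₃ * dist p c₃ ^ 2 -
        (w₁ * w₂ * dist c₁ c₂ ^ 2 + w₁ * w₃ * dist c₁ c₃ ^ 2 + w₂ * w₃ * dist c₂ c₃ ^ 2) := by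
  have hsplit : p - (w₁ • c₁ + w₂ • c₂ + w₃ • c₃) =
      w₁ • (p - c₁) + w₂ • (p - c₂) + w₃ • (p - c₃) := by
    linear_combination (norm := module) (-hw) • p
  simp only [dist_eq_norm, hsplit, norm_weighted_add₃_sq hw, sub_sub_sub_cancel_left,
    norm_sub_rev c₂ c₁, norm_sub_rev c₃ c₁, norm_sub_rev c₃ c₂]

theorem dist_weighted_add₂_sq {w₁ w₂ : ℝ} (hw : w₁ + w₂ = 1) (p c₁ c₂ : V) :
    dist p (w₁ • c₁ + w₂ • c₂) ^ 2 =
      w₁ * dist p c₁ ^ 2 + w₂ * dist p c₂ ^ 2 - w₁ * w₂ * dist c₁ c₂ ^ 2 := by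
  simpa using dist_weighted_add₃_sq (w₃ := 0) (by linarith) p c₁ c₂ c₂

variable {r₁ r₂ r₃ ρ : ℝ} {o c₁ c₂ c₃ : V}

theorem dist_tangencyPoint_of_orthogonal (hρ : 0 ≤ ρ) (hr : r₁ + r₂ ≠ 0)
    (h₁₂ : dist c₁ c₂ = r₁ + r₂) (h₁ : dist o c₁ ^ 2 = ρ ^ 2 + r₁ ^ 2)
    (h₂ : dist o c₂ ^ 2 = ρ ^ 2 + r₂ ^ 2) :
    dist o ((r₁ + r₂)⁻¹ • (r₂ • c₁ + r₁ • c₂)) = ρ := by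
  have hweights : (r₁ + r₂)⁻¹ • (r₂ • c₁ + r₁ • c₂) =
      (r₂ / (r₁ + r₂)) • c₁ + (r₁ / (r₁ + r₂)) • c₂ := by
    match_scalars <;> field_simp
  have hsq : dist o ((r₁ + r₂)⁻¹ • (r₂ • c₁ + r₁ • c₂)) ^ 2 = ρ ^ 2 := by
    rw [hweights, dist_weighted_add₂_sq (by field_simp; ring), h₁, h₂, h₁₂]
    field_simp
    ring
  exact (sq_eq_sq₀ dist_nonneg hρ).1 hsq

variable (r₁ r₂ r₃ c₁ c₂ c₃) in
/-- The weights are the side lengths `dist c₂ c₃`, `dist c₁ c₃`, `dist c₁ c₂` of the triangle of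
centres over its perimeter, so this is the incenter of that triangle. -/
noncomputable def tangentCirclesIncenter : V :=
  ((r₂ + r₃) / (2 * (r₁ + r₂ + r₃))) • c₁ + ((r₁ + r₃) / (2 * (r₁ + r₂ + r₃))) • c₂ +
    ((r₁ + r₂) / (2 * (r₁ + r₂ + r₃))) • c₃

theorem dist_tangentCirclesIncenter_sq (hs : r₁ + r₂ + r₃ ≠ 0) (h₁₂ : dist c₁ c₂ = r₁ + r₂)
    (h₂₃ : dist c₂ c₃ = r₂ + r₃) (h₁₃ : dist c₁ c₃ = r₁ + r₃) :
    dist (tangentCirclesIncenter r₁ r₂ r₃ c₁ c₂ c₃) c₁ ^ 2 = r₁ * r₂ * r₃ / (r₁ + r₂ + r₃) + r₁ ^ 2 ∧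
    dist (tangentCirclesIncenter r₁ r₂ r₃ c₁ c₂ c₃) c₂ ^ 2 = r₁ * r₂ * r₃ / (r₁ + r₂ + r₃) + r₂ ^ 2 ∧
    dist (tangentCirclesIncenter r₁ r₂ r₃ c₁ c₂ c₃) c₃ ^ 2 = r₁ * r₂ * r₃ / (r₁ + r₂ + r₃) + r₃ ^ 2 := by
  have hw : (r₂ + r₃) / (2 * (r₁ + r₂ + r₃)) + (r₁ + r₃) / (2 * (r₁ + r₂ + r₃)) +
      (r₁ + r₂) / (2 * (r₁ + r₂ + r₃)) = 1 := by
    field_simp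
    ring
  have hdist (p : V) := dist_weighted_add₃_sq hw p c₁ c₂ c₃
  refine ⟨?_, ?_, ?_⟩ <;> rw [dist_comm, tangentCirclesIncenter, hdist, dist_self]
  · rw [h₁₂, h₁₃, h₂₃]
    field_simp
    ring
  · rw [dist_comm c₂ c₁, h₁₂, h₁₃, h₂₃]
    field_simp
    ring
  · rw [dist_comm c₃ c₁, dist_comm c₃ c₂, h₁₂, h₁₃, h₂₃]
    field_simp
    ring

end

/-- The three tangency points of three mutually externally tangent circles
lie on a common circle orthogonal to all three. -/
theorem stmt_8 (c1 c2 c3 : EuclideanSpace ℝ (Fin 2)) (r1 r2 r3 : ℝ)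
    (hr1 : 0 < r1) (hr2 : 0 < r2) (hr3 : 0 < r3)
    (h12 : dist c1 c2 = r1 + r2) (h23 : dist c2 c3 = r2 + r3)
    (h13 : dist c1 c3 = r1 + r3) :
    let t12 := (r1 + r2)⁻¹ • (r2 • c1 + r1 • c2)
    let t23 := (r2 + r3)⁻¹ • (r3 • c2 + r2 • c3)
    let t13 := (r1 + r3)⁻¹ • (r3 • c1 + r1 • c3)
    ∃ (o : EuclideanSpace ℝ (Fin 2)) (ρ : ℝ), 0 < ρ ∧
      dist o t12 = ρ ∧ dist o t23 = ρ ∧ dist o t13 = ρ ∧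
      dist o c1 ^ 2 = ρ ^ 2 + r1 ^ 2 ∧
      dist o c2 ^ 2 = ρ ^ 2 + r2 ^ 2 ∧
      dist o c3 ^ 2 = ρ ^ 2 + r3 ^ 2 := by
  intro t12 t23 t13
  have hs : 0 < r1 + r2 + r3 := by positivity
  have hρ : √(r1 * r2 * r3 / (r1 + r2 + r3)) ^ 2 = r1 * r2 * r3 / (r1 + r2 + r3) :=
    Real.sq_sqrt (by positivity)
  obtain ⟨h1, h2, h3⟩ := dist_tangentCirclesIncenter_sq hs.ne' h12 h23 h13
  rw [← hρ] at h1 h2 h3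
  refine ⟨_, _, Real.sqrt_pos.2 (by positivity), ?_, ?_, ?_, h1, h2, h3⟩
  · exact dist_tangencyPoint_of_orthogonal (Real.sqrt_nonneg _) (by positivity) h12 h1 h2
  · exact dist_tangencyPoint_of_orthogonal (Real.sqrt_nonneg _) (by positivity) h23 h2 h3
  · exact dist_tangencyPoint_of_orthogonal (Real.sqrt_nonneg _) (by positivity) h13 h1 h3
end
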